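/- arXiv:2006.10974 — 3 statements merged into one kernel-verified Lean document; each statement's English description precedes it below -/
import Mathlib

section
/- Let F, Ftilde : ℝ^d → ℝ be differentiable, with F being μ-smooth (its gradient is μ-Lipschitz). Define Δ(w) = ∇Ftilde(w) − ∇F(w). Suppose at a point w, ‖∇Ftilde(w)‖ ≥ c·‖Δ(w)‖ for some c > 1, and let w' = w − η∇Ftilde(w) with step size η ≤ 2(1 − 1/c)/μ. Then F(w') ≤ F(w) − η(1 − 1/c − μη/2)·‖∇Ftilde(w)‖². -/
/-!
Along the segment from `x` to `x + v` the directional derivative of a `μ`-smooth `F` drifts from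
`⟪∇F x, v⟫` by at most `μ t ‖v‖²`, which integrates to the quadratic upper bound
`F (x + v) ≤ F x + ⟪∇F x, v⟫ + μ/2 ‖v‖²`. For the step `v = -η ∇F̃ w`, writing
`∇F w = ∇F̃ w - Δ w` and using `‖Δ w‖ ≤ ‖∇F̃ w‖ / c` bounds the first-order term by
`-η (1 - 1/c) ‖∇F̃ w‖²`.
-/

open scoped RealInnerProductSpace

section Smooth

variable {E : Type*} [NormedAddCommGroup E] [InnerProductSpace ℝ E] [CompleteSpace E]
  {F : E → ℝ} {μ : ℝ}

theorem Differentiable.hasDerivAt_comp_add_smul (hF : Differentiable ℝ F) (x v : E) (t : ℝ) :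
    HasDerivAt (fun s : ℝ => F (x + s • v)) ⟪gradient F (x + t • v), v⟫ t := by
  have hline : HasDerivAt (fun s : ℝ => x + s • v) v t := by
    simpa using ((hasDerivAt_id t).smul_const v).const_add x
  exact (hF (x + t • v)).hasGradientAt.hasFDerivAt.comp_hasDerivAt t hline

theorem inner_gradient_add_smul_sub_le
    (hsmooth : ∀ x y, ‖gradient F x - gradient F y‖ ≤ μ * ‖x - y‖)
    (x v : E) {t : ℝ} (ht : 0 ≤ t) :
    ⟪gradient F (x + t • v) - gradient F x, v⟫ ≤ μ * t * ‖v‖ ^ 2 :=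
  calc ⟪gradient F (x + t • v) - gradient F x, v⟫
      ≤ ‖gradient F (x + t • v) - gradient F x‖ * ‖v‖ := real_inner_le_norm _ _
    _ ≤ μ * ‖x + t • v - x‖ * ‖v‖ := by gcongr; exact hsmooth _ _
    _ = μ * t * ‖v‖ ^ 2 := by
      rw [add_sub_cancel_left, norm_smul, Real.norm_of_nonneg ht]; ring

theorem Differentiable.apply_add_le_of_lipschitz_gradient (hF : Differentiable ℝ F)
    (hsmooth : ∀ x y, ‖gradient F x - gradient F y‖ ≤ μ * ‖x - y‖) (x v : E) :
    F (x + v) ≤ F x + ⟪gradient F x, v⟫ + μ / 2 * ‖v‖ ^ 2 := by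
  set φ : ℝ → ℝ := fun t => F (x + t • v) - t * ⟪gradient F x, v⟫ - μ * t ^ 2 / 2 * ‖v‖ ^ 2
  have hφ : ∀ t, HasDerivAt φ
      (⟪gradient F (x + t • v), v⟫ - ⟪gradient F x, v⟫ - μ * t * ‖v‖ ^ 2) t := by
    intro t
    have hquad : HasDerivAt (fun s : ℝ => μ * s ^ 2 / 2 * ‖v‖ ^ 2) (μ * t * ‖v‖ ^ 2) t := by
      refine ((((hasDerivAt_pow 2 t).const_mul μ).div_const 2).mul_const _).congr_deriv ?_
      push_cast; ring
    exact ((hF.hasDerivAt_comp_add_smul x v t).sub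
      ((hasDerivAt_id t).mul_const _)).sub hquad |>.congr_deriv (by simp)
  have hanti : AntitoneOn φ (Set.Icc 0 1) := by
    refine antitoneOn_of_deriv_nonpos (convex_Icc 0 1)
      (fun t _ => (hφ t).continuousAt.continuousWithinAt)
      (fun t _ => (hφ t).differentiableAt.differentiableWithinAt) fun t ht => ?_
    rw [interior_Icc] at ht
    have := inner_gradient_add_smul_sub_le hsmooth x v ht.1.le
    rw [inner_sub_left] at this
    rw [(hφ t).deriv]
    linarith
  have h01 := hanti (Set.left_mem_Icc.2 zero_le_one) (Set.right_mem_Icc.2 zero_le_one) zero_le_one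
  simp only [φ, one_smul, zero_smul, add_zero] at h01
  linarith

end Smooth

theorem le_inner_sub_of_mul_norm_le {E : Type*} [NormedAddCommGroup E] [InnerProductSpace ℝ E]
    {g δ : E} {c : ℝ} (hc : 0 < c) (h : c * ‖δ‖ ≤ ‖g‖) :
    (1 - 1 / c) * ‖g‖ ^ 2 ≤ ⟪g - δ, g⟫ := by
  have hδ : ‖δ‖ ≤ ‖g‖ / c := by rw [le_div_iff₀ hc]; linarith
  have : ⟪δ, g⟫ ≤ ‖g‖ / c * ‖g‖ :=
    (real_inner_le_norm δ g).trans (mul_le_mul_of_nonneg_right hδ (norm_nonneg g))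
  rw [inner_sub_left, real_inner_self_eq_norm_sq]
  linarith [show (1 - 1 / c) * ‖g‖ ^ 2 = ‖g‖ ^ 2 - ‖g‖ / c * ‖g‖ by ring]

theorem stmt_0_general {d : ℕ} (F Ftilde : EuclideanSpace ℝ (Fin d) → ℝ)
    (hF : Differentiable ℝ F)
    (μ : ℝ)
    (hsmooth : ∀ x y, ‖gradient F x - gradient F y‖ ≤ μ * ‖x - y‖)
    (Δ : EuclideanSpace ℝ (Fin d) → EuclideanSpace ℝ (Fin d))
    (hΔ : ∀ x, Δ x = gradient Ftilde x - gradient F x)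
    (w : EuclideanSpace ℝ (Fin d)) (c : ℝ) (hc : 1 < c)
    (hgrad : ‖gradient Ftilde w‖ ≥ c * ‖Δ w‖)
    (η : ℝ) (hη0 : 0 < η)
    (w' : EuclideanSpace ℝ (Fin d)) (hw' : w' = w - η • gradient Ftilde w) :
    F w' ≤ F w - η * (1 - 1 / c - μ * η / 2) * ‖gradient Ftilde w‖ ^ 2 := by
  set g := gradient Ftilde w
  have hdescent := hF.apply_add_le_of_lipschitz_gradient hsmooth w ((-η) • g)
  have hstep : w + (-η) • g = w' := by rw [hw']; module
  have hgF : gradient F w = g - Δ w := by rw [hΔ]; abel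
  have hfirst := le_inner_sub_of_mul_norm_le (by linarith) hgrad
  rw [hstep, inner_smul_right, hgF, norm_smul, mul_pow, Real.norm_eq_abs, sq_abs] at hdescent
  linarith [mul_le_mul_of_nonneg_left hfirst hη0.le]

theorem stmt_0 {d : ℕ} (F Ftilde : EuclideanSpace ℝ (Fin d) → ℝ)
    (hF : Differentiable ℝ F) (hFt : Differentiable ℝ Ftilde)
    (μ : ℝ) (hμ : 0 < μ)
    (hsmooth : ∀ x y, ‖gradient F x - gradient F y‖ ≤ μ * ‖x - y‖)
    (Δ : EuclideanSpace ℝ (Fin d) → EuclideanSpace ℝ (Fin d))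
    (hΔ : ∀ x, Δ x = gradient Ftilde x - gradient F x)
    (w : EuclideanSpace ℝ (Fin d)) (c : ℝ) (hc : 1 < c)
    (hgrad : ‖gradient Ftilde w‖ ≥ c * ‖Δ w‖)
    (η : ℝ) (hη0 : 0 < η) (hη : η ≤ 2 * (1 - 1 / c) / μ)
    (w' : EuclideanSpace ℝ (Fin d)) (hw' : w' = w - η • gradient Ftilde w) :
    F w' ≤ F w - η * (1 - 1 / c - μ * η / 2) * ‖gradient Ftilde w‖ ^ 2 :=
  stmt_0_general F Ftilde hF μ hsmooth Δ hΔ w c hc hgrad η hη0 w' hw'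
end

section
/- There exist functions F, Ftilde : [0,1] → ℝ and a point ŵ₁ = 0 — namely F(w) = (w−1)² + (ρ/6)w³ and Ftilde(w) = (w−1)² − (δ/4)w² for given δ, ρ > 0 — such that F(0) = Ftilde(0), F'(0) = Ftilde'(0), |F''(0) − Ftilde''(0)| = δ/2, F''' ≡ ρ, and for every w ∈ [0,1]: if |Ftilde'(w)| < (δ/2)·|w − 0| + (ρ/2)·(w − 0)², then Ftilde'(w)·F'(w) < 0. -/
/-!
The two slopes differ by exactly the gradient-norm bound:
`F' w = Ftilde' w + (δ / 2) w + (ρ / 2) w ^ 2`. On `[0, 1]` the surrogate slope is negative, so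
when `|Ftilde' w|` is below that bound, adding the bound makes `F' w` positive.
-/

open Set

noncomputable def trueObjective (ρ w : ℝ) : ℝ := (w - 1) ^ 2 + ρ / 6 * w ^ 3

noncomputable def surrogate (δ w : ℝ) : ℝ := (w - 1) ^ 2 - δ / 4 * w ^ 2

theorem mul_add_neg_of_neg_of_abs_lt {a b : ℝ} (ha : a < 0) (h : |a| < b) : a * (a + b) < 0 :=
  mul_neg_of_neg_of_pos ha (by linarith [neg_abs_le a])

section Derivatives

variable (δ ρ : ℝ)

theorem deriv_trueObjective :
    deriv (trueObjective ρ) = fun w => 2 * (w - 1) + ρ / 2 * w ^ 2 := by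
  funext w
  unfold trueObjective
  simp (disch := fun_prop) only [deriv_fun_add, deriv_fun_sub, deriv_fun_mul, deriv_fun_pow,
    deriv_id'', deriv_const']
  ring

theorem deriv_deriv_trueObjective : deriv (deriv (trueObjective ρ)) = fun w => 2 + ρ * w := by
  funext w
  simp (disch := fun_prop) only [deriv_trueObjective, deriv_fun_add, deriv_fun_sub, deriv_fun_mul,
    deriv_fun_pow, deriv_id'', deriv_const']
  ring

theorem deriv_deriv_deriv_trueObjective :
    deriv (deriv (deriv (trueObjective ρ))) = fun _ => ρ := by
  funext w
  simp [deriv_deriv_trueObjective]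

theorem deriv_surrogate : deriv (surrogate δ) = fun w => 2 * (w - 1) - δ / 2 * w := by
  funext w
  unfold surrogate
  simp (disch := fun_prop) only [deriv_fun_sub, deriv_fun_mul, deriv_fun_pow, deriv_id'',
    deriv_const']
  ring

theorem deriv_deriv_surrogate : deriv (deriv (surrogate δ)) = fun _ => 2 - δ / 2 := by
  funext w
  simp (disch := fun_prop) only [deriv_surrogate, deriv_fun_sub, deriv_fun_mul, deriv_id'',
    deriv_const', deriv_const_mul_id']
  ring

theorem deriv_trueObjective_eq_deriv_surrogate_add (w : ℝ) :
    deriv (trueObjective ρ) w = deriv (surrogate δ) w + (δ / 2 * w + ρ / 2 * w ^ 2) := by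
  rw [deriv_trueObjective, deriv_surrogate]
  ring

variable {δ}

theorem deriv_surrogate_neg (hδ : 0 < δ) {w : ℝ} (hw : w ∈ Icc 0 1) : deriv (surrogate δ) w < 0 := by
  obtain ⟨hw0, hw1⟩ := hw
  simp only [deriv_surrogate]
  rcases hw1.lt_or_eq with hw1 | rfl
  · nlinarith [mul_nonneg hδ.le hw0]
  · linarith

end Derivatives

theorem stmt_3_general (δ ρ : ℝ) (hδ : 0 < δ) :
    ∃ F Ftilde : ℝ → ℝ,
      (∀ w, F w = (w - 1) ^ 2 + (ρ / 6) * w ^ 3) ∧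
      (∀ w, Ftilde w = (w - 1) ^ 2 - (δ / 4) * w ^ 2) ∧
      F 0 = Ftilde 0 ∧
      deriv F 0 = deriv Ftilde 0 ∧
      |deriv (deriv F) 0 - deriv (deriv Ftilde) 0| = δ / 2 ∧
      (∀ w, deriv (deriv (deriv F)) w = ρ) ∧
      (∀ w ∈ Set.Icc (0 : ℝ) 1,
        |deriv Ftilde w| < (δ / 2) * |w - 0| + (ρ / 2) * (w - 0) ^ 2 →
          deriv Ftilde w * deriv F w < 0) := by
  refine ⟨trueObjective ρ, surrogate δ, fun _ => rfl, fun _ => rfl, ?_, ?_, ?_,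
    fun _ => by rw [deriv_deriv_deriv_trueObjective], ?_⟩
  · norm_num [trueObjective, surrogate]
  · norm_num [deriv_trueObjective, deriv_surrogate]
  · norm_num [deriv_deriv_trueObjective, deriv_deriv_surrogate, abs_of_pos (half_pos hδ)]
  · intro w hw hsmall
    rw [sub_zero, abs_of_nonneg hw.1] at hsmall
    rw [deriv_trueObjective_eq_deriv_surrogate_add δ]
    exact mul_add_neg_of_neg_of_abs_lt (deriv_surrogate_neg hδ hw) hsmall

theorem stmt_3 (δ ρ : ℝ) (hδ : 0 < δ) (hρ : 0 < ρ) :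
    ∃ F Ftilde : ℝ → ℝ,
      (∀ w, F w = (w - 1) ^ 2 + (ρ / 6) * w ^ 3) ∧
      (∀ w, Ftilde w = (w - 1) ^ 2 - (δ / 4) * w ^ 2) ∧
      F 0 = Ftilde 0 ∧
      deriv F 0 = deriv Ftilde 0 ∧
      |deriv (deriv F) 0 - deriv (deriv Ftilde) 0| = δ / 2 ∧
      (∀ w, deriv (deriv (deriv F)) w = ρ) ∧
      (∀ w ∈ Set.Icc (0 : ℝ) 1,
        |deriv Ftilde w| < (δ / 2) * |w - 0| + (ρ / 2) * (w - 0) ^ 2 →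
          deriv Ftilde w * deriv F w < 0) :=
  stmt_3_general δ ρ hδ
end

section
/- Let F, G : ℝ^d → ℝ with F differentiable, F μ-smooth, G differentiable and μ-smooth, and suppose F₀ := F(w₀), F* := inf F > −∞, G₀ := G(w₀), G* := inf G > −∞. Define Δ(w) = ∇G(w) − ∇F(w) and suppose ‖Δ(w)‖ ≤ C + δ‖w − w₀‖ + 2ρ‖w − w₀‖² for all w, where C, δ, ρ ≥ 0. Run gradient descent w_t = w_{t−1} − (1/μ)∇G(w_{t−1}) for T steps. Then (1/T)Σ_{t=1}^T ‖∇F(w_{t−1})‖ ≤ √(2μ(F₀ − F*))/√T + √3·C + δ√((3/μ)(G₀ − G*))·√T + (4ρ/μ)(G₀ − G*)·T. -/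
/-!
Gradient descent with step `1/μ` on the μ-smooth surrogate `G` decreases `G` by `‖∇G‖² / (2μ)` per
step; telescoping bounds `∑ ‖∇G(w_t)‖²` by `2μ(G₀ - G*)`, so by Cauchy–Schwarz the iterates stay
within `√((2/μ)(G₀ - G*) t)` of `w₀`. The same step decreases `F` by `(‖∇F‖² - ‖Δ‖²) / (2μ)`, hence
`∑ ‖∇F(w_t)‖² ≤ 2μ(F₀ - F*) + ∑ ‖Δ(w_t)‖²`, and the growth bound on `Δ` along the iterates makes
the last sum `O(T + δ² T² + ρ² T³)`. Cauchy–Schwarz once more turns this into the bound on the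
average gradient norm.
-/

open scoped RealInnerProductSpace

theorem sum_range_cast_le (n : ℕ) : ∑ t ∈ Finset.range n, (t : ℝ) ≤ (n : ℝ) ^ 2 / 2 := by
  induction n with
  | zero => simp
  | succ n ih => rw [Finset.sum_range_succ]; push_cast; nlinarith

theorem sum_range_cast_sq_le (n : ℕ) : ∑ t ∈ Finset.range n, (t : ℝ) ^ 2 ≤ (n : ℝ) ^ 3 / 3 := by
  induction n with
  | zero => simp
  | succ n ih => rw [Finset.sum_range_succ]; push_cast; nlinarith [(n.cast_nonneg : (0 : ℝ) ≤ n)]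

theorem sum_range_sq_le_of_le_add_mul_add_mul_sq {e r : ℕ → ℝ} {C δ ρ a : ℝ} (ha : 0 ≤ a)
    (he : ∀ t, 0 ≤ e t) (hbound : ∀ t, e t ≤ C + δ * r t + 2 * ρ * r t ^ 2)
    (hr : ∀ t, r t ^ 2 ≤ a * t) (n : ℕ) :
    ∑ t ∈ Finset.range n, e t ^ 2 ≤
      3 * C ^ 2 * n + 3 * δ ^ 2 * a * (n ^ 2 / 2) + 12 * ρ ^ 2 * a ^ 2 * (n ^ 3 / 3) := by
  have hpoint : ∀ t : ℕ, e t ^ 2 ≤ 3 * C ^ 2 + 3 * δ ^ 2 * a * t + 12 * ρ ^ 2 * a ^ 2 * t ^ 2 := by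
    intro t
    have hsq : e t ^ 2 ≤ (C + δ * r t + 2 * ρ * r t ^ 2) ^ 2 := pow_le_pow_left₀ (he t) (hbound t) 2
    have hr4 : (r t ^ 2) ^ 2 ≤ (a * t) ^ 2 := pow_le_pow_left₀ (sq_nonneg _) (hr t) 2
    nlinarith [sq_nonneg (C - δ * r t), sq_nonneg (C - 2 * ρ * r t ^ 2),
      sq_nonneg (δ * r t - 2 * ρ * r t ^ 2), mul_le_mul_of_nonneg_left (hr t) (sq_nonneg δ),
      mul_le_mul_of_nonneg_left hr4 (sq_nonneg ρ)]
  calc ∑ t ∈ Finset.range n, e t ^ 2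
      ≤ ∑ t ∈ Finset.range n, (3 * C ^ 2 + 3 * δ ^ 2 * a * t + 12 * ρ ^ 2 * a ^ 2 * t ^ 2) :=
        Finset.sum_le_sum fun t _ => hpoint t
    _ = 3 * C ^ 2 * n + 3 * δ ^ 2 * a * ∑ t ∈ Finset.range n, (t : ℝ)
          + 12 * ρ ^ 2 * a ^ 2 * ∑ t ∈ Finset.range n, (t : ℝ) ^ 2 := by
        simp only [Finset.sum_add_distrib, ← Finset.mul_sum, Finset.sum_const, Finset.card_range,
          nsmul_eq_mul]
        ring
    _ ≤ _ := by gcongr; exacts [sum_range_cast_le n, sum_range_cast_sq_le n]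

theorem sq_add_sq_add_sq_add_sq_le_sq {a b c d : ℝ} (ha : 0 ≤ a) (hb : 0 ≤ b) (hc : 0 ≤ c)
    (hd : 0 ≤ d) : a ^ 2 + b ^ 2 + c ^ 2 + d ^ 2 ≤ (a + b + c + d) ^ 2 := by
  nlinarith [mul_nonneg ha hb, mul_nonneg ha hc, mul_nonneg ha hd, mul_nonneg hb hc,
    mul_nonneg hb hd, mul_nonneg hc hd]

theorem one_div_card_mul_sum_le_of_sum_sq_le {ι : Type*} (s : Finset ι) (f : ι → ℝ) {x : ℝ}
    (hx : 0 ≤ x) (h : ∑ i ∈ s, f i ^ 2 ≤ s.card * x ^ 2) :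
    1 / (s.card : ℝ) * ∑ i ∈ s, f i ≤ x := by
  rcases s.eq_empty_or_nonempty with rfl | hs
  · simpa using hx
  have hcard : (0 : ℝ) < s.card := by exact_mod_cast hs.card_pos
  have hsum : ∑ i ∈ s, f i ≤ s.card * x := by
    refine abs_le_of_sq_le_sq' ?_ (by positivity) |>.2
    calc (∑ i ∈ s, f i) ^ 2 ≤ s.card * ∑ i ∈ s, f i ^ 2 := sq_sum_le_card_mul_sum_sq
      _ ≤ s.card * (s.card * x ^ 2) := by gcongr
      _ = (s.card * x) ^ 2 := by ring
  rw [one_div_mul_eq_div, div_le_iff₀ hcard]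
  linarith

section GradientDescent

variable {E : Type*} [NormedAddCommGroup E] [InnerProductSpace ℝ E] [CompleteSpace E]
  {f : E → ℝ} {μ : ℝ}

theorem apply_le_add_inner_gradient_add_sq (hf : Differentiable ℝ f)
    (hsmooth : ∀ x y, ‖gradient f x - gradient f y‖ ≤ μ * ‖x - y‖) (x y : E) :
    f y ≤ f x + ⟪gradient f x, y - x⟫ + μ / 2 * ‖y - x‖ ^ 2 := by
  set v := y - x
  -- `f` minus its quadratic upper model along the segment is antitone, as `∇f` is `μ`-Lipschitz.
  let φ : ℝ → ℝ := fun t => f (x + t • v) - t * ⟪gradient f x, v⟫ - μ / 2 * ‖v‖ ^ 2 * t ^ 2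
  have hφ : ∀ t, HasDerivAt φ (⟪gradient f (x + t • v), v⟫ - ⟪gradient f x, v⟫
      - μ * ‖v‖ ^ 2 * t) t := by
    intro t
    have hline : HasDerivAt (fun t : ℝ => x + t • v) v t := by
      simpa using ((hasDerivAt_id t).smul_const v).const_add x
    have hcomp := (hf (x + t • v)).hasFDerivAt.comp_hasDerivAt t hline
    rw [← inner_gradient_left] at hcomp
    refine ((hcomp.sub (hasDerivAt_mul_const ⟪gradient f x, v⟫)).sub
      ((hasDerivAt_pow 2 t).const_mul (μ / 2 * ‖v‖ ^ 2))).congr_deriv ?_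
    ring
  have hanti : AntitoneOn φ (Set.Ici 0) := by
    refine antitoneOn_of_hasDerivWithinAt_nonpos (convex_Ici 0)
      (fun t _ => (hφ t).continuousAt.continuousWithinAt)
      (fun t _ => (hφ t).hasDerivWithinAt) fun t ht => ?_
    rw [interior_Ici, Set.mem_Ioi] at ht
    have hnorm : ‖gradient f (x + t • v) - gradient f x‖ ≤ μ * t * ‖v‖ := by
      simpa [norm_smul, abs_of_pos ht, mul_assoc] using hsmooth (x + t • v) x
    have := real_inner_le_norm (gradient f (x + t • v) - gradient f x) v
    rw [inner_sub_left] at this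
    nlinarith [mul_le_mul_of_nonneg_right hnorm (norm_nonneg v)]
  have := hanti Set.self_mem_Ici (Set.mem_Ici.mpr zero_le_one) zero_le_one
  simp only [φ, zero_smul, add_zero, zero_mul, sub_zero, one_smul, one_mul, one_pow,
    mul_one, mul_zero, zero_pow two_ne_zero, show x + v = y from add_sub_cancel x y] at this
  linarith

theorem apply_sub_smul_le (hμ : 0 < μ) (hf : Differentiable ℝ f)
    (hsmooth : ∀ x y, ‖gradient f x - gradient f y‖ ≤ μ * ‖x - y‖) (x g : E) :
    f (x - (1 / μ) • g) ≤ f x - (‖gradient f x‖ ^ 2 - ‖g - gradient f x‖ ^ 2) / (2 * μ) := by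
  have h := apply_le_add_inner_gradient_add_sq hf hsmooth x (x - (1 / μ) • g)
  rw [sub_sub_cancel_left, inner_neg_right, real_inner_smul_right, norm_neg, norm_smul,
    Real.norm_of_nonneg (by positivity)] at h
  have hsq : ‖g - gradient f x‖ ^ 2 = ‖g‖ ^ 2 - 2 * ⟪gradient f x, g⟫ + ‖gradient f x‖ ^ 2 := by
    rw [norm_sub_sq_real, real_inner_comm]
  have hexpand : 2 * μ * (-(1 / μ * ⟪gradient f x, g⟫) + μ / 2 * (1 / μ * ‖g‖) ^ 2)
      = ‖g‖ ^ 2 - 2 * ⟪gradient f x, g⟫ := by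
    field_simp; ring
  rw [le_sub_iff_add_le, ← le_sub_iff_add_le', div_le_iff₀ (by positivity)]
  nlinarith

theorem sum_range_sq_norm_gradient_le (hμ : 0 < μ) (hf : Differentiable ℝ f)
    (hsmooth : ∀ x y, ‖gradient f x - gradient f y‖ ≤ μ * ‖x - y‖) (hbdd : BddBelow (Set.range f))
    {w g : ℕ → E} (hstep : ∀ t, w (t + 1) = w t - (1 / μ) • g t) (n : ℕ) :
    ∑ t ∈ Finset.range n, ‖gradient f (w t)‖ ^ 2 ≤
      2 * μ * (f (w 0) - ⨅ x, f x) + ∑ t ∈ Finset.range n, ‖g t - gradient f (w t)‖ ^ 2 := by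
  have hdesc : ∀ t, ‖gradient f (w t)‖ ^ 2 - ‖g t - gradient f (w t)‖ ^ 2
      ≤ 2 * μ * f (w t) - 2 * μ * f (w (t + 1)) := fun t => by
    have h := apply_sub_smul_le hμ hf hsmooth (w t) (g t)
    rw [← hstep, le_sub_comm, div_le_iff₀ (by positivity)] at h
    linarith
  have htele := Finset.sum_le_sum fun t (_ : t ∈ Finset.range n) => hdesc t
  rw [Finset.sum_sub_distrib, Finset.sum_range_sub' (fun t => 2 * μ * f (w t))] at htele
  nlinarith [ciInf_le hbdd (w n)]

theorem norm_sub_sq_le_of_gradient_step (hμ : 0 < μ) (hf : Differentiable ℝ f)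
    (hsmooth : ∀ x y, ‖gradient f x - gradient f y‖ ≤ μ * ‖x - y‖) (hbdd : BddBelow (Set.range f))
    {w : ℕ → E} (hstep : ∀ t, w (t + 1) = w t - (1 / μ) • gradient f (w t)) (n : ℕ) :
    ‖w n - w 0‖ ^ 2 ≤ 2 / μ * (f (w 0) - ⨅ x, f x) * n := by
  have hpath : ‖w n - w 0‖ ≤ 1 / μ * ∑ t ∈ Finset.range n, ‖gradient f (w t)‖ := by
    have := dist_le_range_sum_dist w n
    simp only [dist_eq_norm, hstep, sub_sub_cancel, norm_smul,
      Real.norm_of_nonneg (one_div_pos.mpr hμ).le, ← Finset.mul_sum] at this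
    rwa [norm_sub_rev]
  have hcs := sq_sum_le_card_mul_sum_sq (s := Finset.range n) (f := fun t => ‖gradient f (w t)‖)
  have henergy := sum_range_sq_norm_gradient_le hμ hf hsmooth hbdd hstep n
  simp only [sub_self, norm_zero, ne_eq, OfNat.ofNat_ne_zero, not_false_eq_true, zero_pow,
    Finset.sum_const_zero, add_zero, Finset.card_range] at henergy hcs
  calc ‖w n - w 0‖ ^ 2 ≤ (1 / μ * ∑ t ∈ Finset.range n, ‖gradient f (w t)‖) ^ 2 :=
        pow_le_pow_left₀ (norm_nonneg _) hpath 2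
    _ ≤ (1 / μ) ^ 2 * (n * (2 * μ * (f (w 0) - ⨅ x, f x))) := by
        rw [mul_pow]; gcongr; exact hcs.trans (by gcongr)
    _ = 2 / μ * (f (w 0) - ⨅ x, f x) * n := by field_simp

theorem sum_range_sq_norm_gradient_le_of_surrogate {F G : E → ℝ} (hμ : 0 < μ)
    (hFdiff : Differentiable ℝ F) (hGdiff : Differentiable ℝ G)
    (hFsmooth : ∀ x y, ‖gradient F x - gradient F y‖ ≤ μ * ‖x - y‖)
    (hGsmooth : ∀ x y, ‖gradient G x - gradient G y‖ ≤ μ * ‖x - y‖)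
    (hFbdd : BddBelow (Set.range F)) (hGbdd : BddBelow (Set.range G)) {C δ ρ : ℝ} {w : ℕ → E}
    (hΔ : ∀ x, ‖gradient G x - gradient F x‖ ≤ C + δ * ‖x - w 0‖ + 2 * ρ * ‖x - w 0‖ ^ 2)
    (hstep : ∀ t, w (t + 1) = w t - (1 / μ) • gradient G (w t)) (T : ℕ) :
    ∑ t ∈ Finset.range T, ‖gradient F (w t)‖ ^ 2 ≤
      2 * μ * (F (w 0) - ⨅ x, F x) + 3 * C ^ 2 * T
        + 3 * δ ^ 2 / μ * (G (w 0) - ⨅ x, G x) * T ^ 2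
        + 16 * ρ ^ 2 / μ ^ 2 * (G (w 0) - ⨅ x, G x) ^ 2 * T ^ 3 := by
  have hDG : 0 ≤ G (w 0) - ⨅ x, G x := sub_nonneg.mpr (ciInf_le hGbdd (w 0))
  have hF := sum_range_sq_norm_gradient_le hμ hFdiff hFsmooth hFbdd hstep T
  have herr := sum_range_sq_le_of_le_add_mul_add_mul_sq (by positivity) (fun _ => norm_nonneg _)
    (fun t => hΔ (w t)) (norm_sub_sq_le_of_gradient_step hμ hGdiff hGsmooth hGbdd hstep) T
  refine (hF.trans (add_le_add_right herr _)).trans_eq ?_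
  field_simp
  ring

end GradientDescent

theorem stmt_8 {d : ℕ} (F G : EuclideanSpace ℝ (Fin d) → ℝ)
    (μ : ℝ) (hμ : 0 < μ)
    (hFdiff : Differentiable ℝ F) (hGdiff : Differentiable ℝ G)
    (hFsmooth : ∀ x y, ‖gradient F x - gradient F y‖ ≤ μ * ‖x - y‖)
    (hGsmooth : ∀ x y, ‖gradient G x - gradient G y‖ ≤ μ * ‖x - y‖)
    (hFbdd : BddBelow (Set.range F)) (hGbdd : BddBelow (Set.range G))
    (C δ ρ : ℝ) (hC : 0 ≤ C) (hδ : 0 ≤ δ) (hρ : 0 ≤ ρ)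
    (w : ℕ → EuclideanSpace ℝ (Fin d))
    (hΔ : ∀ x, ‖gradient G x - gradient F x‖ ≤ C + δ * ‖x - w 0‖ + 2 * ρ * ‖x - w 0‖ ^ 2)
    (hstep : ∀ t : ℕ, w (t + 1) = w t - (1 / μ) • gradient G (w t))
    (T : ℕ) (hT : 1 ≤ T) :
    (1 / (T : ℝ)) * ∑ t ∈ Finset.range T, ‖gradient F (w t)‖ ≤
      Real.sqrt (2 * μ * (F (w 0) - ⨅ x, F x)) / Real.sqrt T
        + Real.sqrt 3 * C
        + δ * Real.sqrt ((3 / μ) * (G (w 0) - ⨅ x, G x)) * Real.sqrt T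
        + (4 * ρ / μ) * (G (w 0) - ⨅ x, G x) * T := by
  have hsum := sum_range_sq_norm_gradient_le_of_surrogate hμ hFdiff hGdiff hFsmooth hGsmooth
    hFbdd hGbdd hΔ hstep T
  set DF := F (w 0) - ⨅ x, F x
  set DG := G (w 0) - ⨅ x, G x
  have hDF : 0 ≤ DF := sub_nonneg.mpr (ciInf_le hFbdd (w 0))
  have hDG : 0 ≤ DG := sub_nonneg.mpr (ciInf_le hGbdd (w 0))
  have hT0 : (0 : ℝ) < T := by exact_mod_cast hT
  set a := Real.sqrt (2 * μ * DF) / Real.sqrt T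
  set b := Real.sqrt 3 * C
  set c := δ * Real.sqrt ((3 / μ) * DG) * Real.sqrt T
  set e := (4 * ρ / μ) * DG * T
  have hsq : a ^ 2 + b ^ 2 + c ^ 2 + e ^ 2 = (2 * μ * DF + 3 * C ^ 2 * T
      + 3 * δ ^ 2 / μ * DG * T ^ 2 + 16 * ρ ^ 2 / μ ^ 2 * DG ^ 2 * T ^ 3) / T := by
    simp only [a, b, c, e, div_pow, mul_pow, Real.sq_sqrt hT0.le,
      Real.sq_sqrt (by positivity : 0 ≤ 2 * μ * DF), Real.sq_sqrt (by norm_num : (0 : ℝ) ≤ 3),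
      Real.sq_sqrt (by positivity : 0 ≤ 3 / μ * DG)]
    field_simp
    ring
  have hmean := one_div_card_mul_sum_le_of_sum_sq_le (Finset.range T)
    (fun t => ‖gradient F (w t)‖) (by positivity : 0 ≤ a + b + c + e)
  rw [Finset.card_range] at hmean
  refine hmean (hsum.trans ?_)
  rw [← div_le_iff₀' hT0, ← hsq]
  exact sq_add_sq_add_sq_add_sq_le_sq (by positivity) (by positivity) (by positivity)
    (by positivity)
end
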